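/- Let d ≥ 1, let G = ℤ^d, let S be the standard basis of ℤ^d, and let f : ℤ^d → ℝ be a nonzero group homomorphism (which is in particular a pseudocharacter with ‖δf‖ = 0). Then E(f,S) contains precisely two elements, one positive and one negative: |E(f,S)⁺| = 1 and |E(f,S)⁻| = 1. -/
import Mathlib


open Filter

variable {G : Type*} [Group G]

/-- `f : G → ℝ` is a pseudocharacter. -/
def IsPseudochar (f : G → ℝ) : Prop :=
  (∀ (α : G) (n : ℤ), f (α ^ n) = (n : ℝ) * f α) ∧
  ∃ C : ℝ, ∀ α β : G, |f α + f β - f (α * β)| ≤ C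

/-- The set of letters `S ∪ S⁻¹`. -/
def letters (S : Set G) : Set G := S ∪ S⁻¹

/-- An infinite word in the letters `S ∪ S⁻¹`. -/
def IsWord (S : Set G) (w : ℕ → G) : Prop := ∀ i, w i ∈ letters S

/-- The `k`-th prefix product `w₁ ⋯ w_k` of an infinite word (`p₀ = 1`). -/
def prefixProd (w : ℕ → G) : ℕ → G
  | 0 => 1
  | k + 1 => prefixProd w k * w k

open scoped Classical in
/-- The sign `σ(w)` of an infinite word: `1` if `f(pₖ(w)) → +∞`, `-1` if it tends
to `-∞`, and `0` otherwise. -/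
noncomputable def wsign (f : G → ℝ) (w : ℕ → G) : ℤ :=
  if Tendsto (fun k => f (prefixProd w k)) atTop atTop then 1
  else if Tendsto (fun k => f (prefixProd w k)) atTop atBot then -1
  else 0

/-- The equivalence relation `w ∼ v` on infinite words. -/
def WordEquiv (f : G → ℝ) (S : Set G) (w v : ℕ → G) : Prop :=
  wsign f w = wsign f v ∧
  ∃ C : ℝ, 0 < C ∧ ∀ D : ℝ, C < (wsign f w : ℝ) * D →
    ∃ (k l : ℕ) (d : List G),
      (∀ x ∈ d, x ∈ letters S) ∧
      prefixProd w k * d.prod = prefixProd v l ∧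
      ∀ j ≤ d.length, |f (prefixProd w k * (d.take j).prod) - D| ≤ C

/-- The admissible infinite words: words in the letters of `S` with `σ(w) = ±1`. -/
abbrev AdmWord (f : G → ℝ) (S : Set G) : Type _ :=
  {w : ℕ → G // IsWord S w ∧ (wsign f w = 1 ∨ wsign f w = -1)}

/-- The set `E(f,S)` of ends of `G` relative to `f`. -/
def Ends (f : G → ℝ) (S : Set G) :=
  Quot (fun w v : AdmWord f S => WordEquiv f S w.1 v.1)

/-- The class `[w] ∈ E(f,S)` of an admissible word. -/
def endClass (f : G → ℝ) (S : Set G) (w : AdmWord f S) : Ends f S :=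
  Quot.mk _ w

/-- `E(f,S)⁺`, the set of positive ends. -/
def EndsPos (f : G → ℝ) (S : Set G) : Set (Ends f S) :=
  {x | ∃ w : AdmWord f S, wsign f w.1 = 1 ∧ x = endClass f S w}

/-- `E(f,S)⁻`, the set of negative ends. -/
def EndsNeg (f : G → ℝ) (S : Set G) : Set (Ends f S) :=
  {x | ∃ w : AdmWord f S, wsign f w.1 = -1 ∧ x = endClass f S w}

/-- `f` is bushy with respect to `S`: both `E(f,S)⁺` and `E(f,S)⁻` have at least
two elements. -/
def IsBushyPseudochar (f : G → ℝ) (S : Set G) : Prop :=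
  (∃ x ∈ EndsPos f S, ∃ y ∈ EndsPos f S, x ≠ y) ∧
  (∃ x ∈ EndsNeg f S, ∃ y ∈ EndsNeg f S, x ≠ y)

/-- `G` is finitely presented. -/
def IsFinitelyPresented (G : Type*) [Group G] : Prop :=
  ∃ (n : ℕ) (R : Finset (FreeGroup (Fin n))),
    Nonempty (G ≃* FreeGroup (Fin n) ⧸ Subgroup.normalClosure (R : Set (FreeGroup (Fin n))))


section MyAux

variable {G : Type*} [Group G]

-- auxiliary lemmas

lemma myletters_inv {S : Set G} {g : G} (hg : g ∈ letters S) : g⁻¹ ∈ letters S := by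
  rcases hg with h | h
  · exact Or.inr (Set.inv_mem_inv.2 h)
  · exact Or.inl (Set.mem_inv.1 h)

lemma myzpow_list {S : Set G} {g : G} (hg : g ∈ letters S) (n : ℤ) :
    ∃ l : List G, (∀ x ∈ l, x ∈ letters S) ∧ l.prod = g ^ n := by
  rcases le_or_gt 0 n with h | h
  · exact ⟨List.replicate n.toNat g, fun x hx => (List.eq_of_mem_replicate hx) ▸ hg,
      by rw [List.prod_replicate, ← zpow_natCast, Int.toNat_of_nonneg h]⟩
  · exact ⟨List.replicate (-n).toNat g⁻¹, fun x hx => (List.eq_of_mem_replicate hx) ▸ myletters_inv hg,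
      by rw [List.prod_replicate, inv_pow, ← zpow_natCast, Int.toNat_of_nonneg (by omega),
        ← zpow_neg, neg_neg]⟩

def GoodOn (f : G → ℝ) (D A : ℝ) (x : G) (l : List G) : Prop :=
  ∀ j ≤ l.length, |f (x * (l.take j).prod) - D| ≤ A

lemma GoodOn.mono {f : G → ℝ} {D A A' : ℝ} {x : G} {l : List G}
    (h : GoodOn f D A x l) (hA : A ≤ A') : GoodOn f D A' x l :=
  fun j hj => (h j hj).trans hA

lemma goodOn_nil {f : G → ℝ} {D A : ℝ} {x : G} (h : |f x - D| ≤ A) : GoodOn f D A x [] := by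
  intro j hj
  obtain rfl : j = 0 := Nat.le_zero.mp hj
  simpa using h

lemma GoodOn.append {f : G → ℝ} {D A : ℝ} {x : G} {l₁ l₂ : List G} (h₁ : GoodOn f D A x l₁)
    (h₂ : GoodOn f D A (x * l₁.prod) l₂) : GoodOn f D A x (l₁ ++ l₂) := by
  intro j hj
  rcases le_or_gt j l₁.length with h | h
  · rw [List.take_append, Nat.sub_eq_zero_of_le h]
    simpa using h₁ j h
  · rw [List.take_append, List.take_of_length_le h.le, List.prod_append,
      ← mul_assoc]
    refine h₂ (j - l₁.length) ?_
    simp only [List.length_append] at hj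
    omega

lemma goodOn_cons {f : G → ℝ} {D A : ℝ} {x g : G} {l : List G} (hx : |f x - D| ≤ A)
    (h : GoodOn f D A (x * g) l) : GoodOn f D A x (g :: l) := by
  intro j hj
  cases j with
  | zero => simpa using hx
  | succ j =>
    rw [List.take_succ_cons, List.prod_cons, ← mul_assoc]
    exact h j (by simpa using hj)

end MyAux


section MyAux2

variable {G : Type*} [CommGroup G]

structure PCSetup (f : G → ℝ) (S : Set G) (s : G) (c M : ℝ) : Prop where
  hf : ∀ x y : G, f (x * y) = f x + f y
  hs : s ∈ letters S
  hfs : f s = c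
  hc : 0 < c
  hcM : c ≤ M
  hM : ∀ g ∈ letters S, |f g| ≤ M
  hgen : ∀ g : G, ∃ l : List G, (∀ x ∈ l, x ∈ letters S) ∧ l.prod = g

namespace PCSetup

variable {f : G → ℝ} {S : Set G} {s : G} {c M : ℝ}

lemma f_one (H : PCSetup f S s c M) : f (1 : G) = 0 := by
  have h := H.hf 1 1
  rw [one_mul] at h
  linarith

lemma f_inv (H : PCSetup f S s c M) (x : G) : f x⁻¹ = - f x := by
  have h := H.hf x x⁻¹
  rw [mul_inv_cancel, H.f_one] at h
  linarith

lemma f_pow (H : PCSetup f S s c M) (x : G) : ∀ n : ℕ, f (x ^ n) = n * f x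
  | 0 => by simpa using H.f_one
  | n + 1 => by
    rw [pow_succ, H.hf, H.f_pow x n]
    push_cast; ring

lemma f_zpow (H : PCSetup f S s c M) (x : G) (t : ℤ) : f (x ^ t) = t * f x := by
  cases t with
  | ofNat n => simpa using H.f_pow x n
  | negSucc n =>
    rw [zpow_negSucc, H.f_inv, H.f_pow]
    push_cast; ring

/-- Compensation: starting within `c*n + c` of `D`, a run of `s^{±1}`'s reaches within `c`
of `D` without ever getting farther than the starting distance (or `c`). -/
lemma comp (H : PCSetup f S s c M) (D : ℝ) :
    ∀ (n : ℕ) (x : G), |f x - D| ≤ c * n + c →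
    ∃ (l : List G) (m : ℤ), (∀ g ∈ l, g = s ∨ g = s⁻¹) ∧ l.prod = s ^ m ∧
      GoodOn f D (max (|f x - D|) c) x l ∧ |f (x * l.prod) - D| ≤ c := by
  intro n
  induction n with
  | zero =>
    intro x hx
    refine ⟨[], 0, by simp, by simp, goodOn_nil (le_max_left _ _), ?_⟩
    simpa using hx
  | succ n ih =>
    intro x hx
    by_cases hxc : |f x - D| ≤ c
    · exact ⟨[], 0, by simp, by simp, goodOn_nil (le_max_left _ _), by simpa using hxc⟩
    push_neg at hxc
    push_cast at hx
    rcases le_or_gt (f x) D with hle | hgt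
    · have habs : |f x - D| = D - f x := by
        rw [abs_of_nonpos (by linarith)]; ring
      have hx' : |f (x * s) - D| ≤ c * n + c := by
        rw [H.hf, H.hfs, abs_of_nonpos (by linarith [habs ▸ hxc])]
        linarith [habs ▸ hx]
      obtain ⟨l, m, hl, hp, hg, he⟩ := ih (x * s) hx'
      refine ⟨s :: l, 1 + m, ?_, ?_, ?_, ?_⟩
      · intro g hg'
        rcases List.mem_cons.1 hg' with rfl | h
        · exact Or.inl rfl
        · exact hl g h
      · rw [List.prod_cons, hp, zpow_add, zpow_one]
      · refine goodOn_cons (le_max_left _ _) (hg.mono ?_)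
        refine max_le (le_max_of_le_left ?_) (le_max_right _ _)
        have h1 : |f (x * s) - D| ≤ |f x - D| - c := by
          rw [H.hf, H.hfs, abs_of_nonpos (by linarith [habs ▸ hxc])]
          linarith [le_of_eq habs]
        linarith [H.hc]
      · rw [List.prod_cons, ← mul_assoc]
        exact he
    · have habs : |f x - D| = f x - D := by
        rw [abs_of_pos (by linarith)]
      have hx' : |f (x * s⁻¹) - D| ≤ c * n + c := by
        rw [H.hf, H.f_inv, H.hfs, abs_of_nonneg (by linarith [habs ▸ hxc])]
        linarith [habs ▸ hx]
      obtain ⟨l, m, hl, hp, hg, he⟩ := ih (x * s⁻¹) hx'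
      refine ⟨s⁻¹ :: l, -1 + m, ?_, ?_, ?_, ?_⟩
      · intro g hg'
        rcases List.mem_cons.1 hg' with rfl | h
        · exact Or.inr rfl
        · exact hl g h
      · rw [List.prod_cons, hp, zpow_add, zpow_neg_one]
      · refine goodOn_cons (le_max_left _ _) (hg.mono ?_)
        refine max_le (le_max_of_le_left ?_) (le_max_right _ _)
        have h1 : |f (x * s⁻¹) - D| ≤ |f x - D| - c := by
          rw [H.hf, H.f_inv, H.hfs, abs_of_nonneg (by linarith [habs ▸ hxc])]
          linarith [le_of_eq habs]
        linarith [H.hc]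
      · rw [List.prod_cons, ← mul_assoc]
        exact he

lemma compA (H : PCSetup f S s c M) (D A : ℝ) (x : G) (hx : |f x - D| ≤ A) :
    ∃ (l : List G) (m : ℤ), (∀ g ∈ l, g = s ∨ g = s⁻¹) ∧ l.prod = s ^ m ∧
      GoodOn f D (max A c) x l ∧ |f (x * l.prod) - D| ≤ c := by
  obtain ⟨n, hn⟩ := exists_nat_ge (A / c)
  have hA : A ≤ c * n := by
    rw [div_le_iff₀ H.hc] at hn
    linarith
  obtain ⟨l, m, h1, h2, h3, h4⟩ := H.comp D n x (by linarith [H.hc])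
  exact ⟨l, m, h1, h2, h3.mono (max_le_max hx le_rfl), h4⟩

end PCSetup

end MyAux2

section MyAux3

variable {G : Type*} [CommGroup G]

namespace PCSetup

variable {f : G → ℝ} {S : Set G} {s : G} {c M : ℝ}

lemma proc (H : PCSetup f S s c M) (D : ℝ) :
    ∀ (u : List G), (∀ g ∈ u, g ∈ letters S) → ∀ x : G, |f x - D| ≤ c →
    ∃ (l : List G) (m : ℤ), (∀ g ∈ l, g ∈ letters S) ∧ l.prod = u.prod * s ^ m ∧
      GoodOn f D (M + c) x l ∧ |f (x * l.prod) - D| ≤ c := by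
  intro u
  induction u with
  | nil =>
    intro _ x hx
    have h0M : 0 ≤ M := le_trans H.hc.le H.hcM
    exact ⟨[], 0, by simp, by simp, goodOn_nil (by linarith), by simpa using hx⟩
  | cons g u ih =>
    intro hu x hx
    have h0M : 0 ≤ M := le_trans H.hc.le H.hcM
    have hg : g ∈ letters S := hu g (by simp)
    have hxg : |f (x * g) - D| ≤ M + c := by
      rw [H.hf]
      have h1 := H.hM g hg
      have h2 : f x + f g - D = (f x - D) + f g := by ring
      rw [h2]
      calc |(f x - D) + f g| ≤ |f x - D| + |f g| := abs_add_le _ _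
        _ ≤ M + c := by linarith
    obtain ⟨l₁, m₁, hl₁, hp₁, hg₁, he₁⟩ := H.compA D (M + c) (x * g) hxg
    obtain ⟨l₂, m₂, hl₂, hp₂, hg₂, he₂⟩ := ih (fun a ha => hu a (by simp [ha])) (x * g * l₁.prod) he₁
    refine ⟨g :: (l₁ ++ l₂), m₁ + m₂, ?_, ?_, ?_, ?_⟩
    · intro a ha
      rcases List.mem_cons.1 ha with rfl | h
      · exact hg
      rcases List.mem_append.1 h with h | h
      · rcases hl₁ a h with rfl | rfl
        · exact H.hs
        · exact myletters_inv H.hs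
      · exact hl₂ a h
    · simp only [List.prod_cons, List.prod_append, hp₁, hp₂, zpow_add, mul_comm,
        mul_left_comm, mul_assoc]
    · refine goodOn_cons (by linarith) (GoodOn.append (hg₁.mono ?_) hg₂)
      exact max_le le_rfl (by linarith)
    · have h3 : x * (g :: (l₁ ++ l₂)).prod = x * g * l₁.prod * l₂.prod := by
        rw [List.prod_cons, List.prod_append, ← mul_assoc, ← mul_assoc]
      rw [h3]
      exact he₂

lemma run (H : PCSetup f S s c M) (D A : ℝ) (t : ℤ) (x : G) (h1 : |f x - D| ≤ A)
    (h2 : |f (x * s ^ t) - D| ≤ A) :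
    ∃ l : List G, (∀ g ∈ l, g ∈ letters S) ∧ l.prod = s ^ t ∧ GoodOn f D A x l := by
  rcases le_or_gt 0 t with ht | ht
  · refine ⟨List.replicate t.toNat s, fun g hg => (List.eq_of_mem_replicate hg) ▸ H.hs, ?_, ?_⟩
    · rw [List.prod_replicate, ← zpow_natCast, Int.toNat_of_nonneg ht]
    · intro j hj
      rw [List.take_replicate, List.prod_replicate]
      set k := min j t.toNat with hk
      have hkt : (k : ℝ) ≤ (t.toNat : ℝ) := by
        exact_mod_cast min_le_right j t.toNat
      have hv : f (x * s ^ k) = f x + k * c := by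
        rw [H.hf, H.f_pow, H.hfs]
      have hv2 : f (x * s ^ t) = f x + (t.toNat : ℝ) * c := by
        rw [← Int.toNat_of_nonneg ht, zpow_natCast, H.hf, H.f_pow, H.hfs]
        push_cast [Int.toNat_of_nonneg ht]
        ring
      rw [hv2] at h2
      rw [hv, abs_le] at *
      have hkc : (k : ℝ) * c ≤ (t.toNat : ℝ) * c := mul_le_mul_of_nonneg_right hkt H.hc.le
      have hk0 : 0 ≤ (k : ℝ) * c := mul_nonneg (Nat.cast_nonneg k) H.hc.le
      rcases h1 with ⟨h1a, h1b⟩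
      rcases h2 with ⟨h2a, h2b⟩
      constructor <;> linarith
  · refine ⟨List.replicate (-t).toNat s⁻¹, fun g hg => (List.eq_of_mem_replicate hg) ▸ myletters_inv H.hs, ?_, ?_⟩
    · rw [List.prod_replicate, inv_pow, ← zpow_natCast, Int.toNat_of_nonneg (by omega), ← zpow_neg,
        neg_neg]
    · intro j hj
      rw [List.take_replicate, List.prod_replicate]
      set k := min j (-t).toNat with hk
      have hkt : (k : ℝ) ≤ ((-t).toNat : ℝ) := by
        exact_mod_cast min_le_right j (-t).toNat
      have hv : f (x * s⁻¹ ^ k) = f x - k * c := by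
        rw [H.hf, H.f_pow, H.f_inv, H.hfs]
        ring
      have hv2 : f (x * s ^ t) = f x - ((-t).toNat : ℝ) * c := by
        have hst : s ^ t = s⁻¹ ^ (-t).toNat := by
          rw [inv_pow, ← zpow_natCast, Int.toNat_of_nonneg (by omega), ← zpow_neg, neg_neg]
        rw [hst, H.hf, H.f_pow, H.f_inv, H.hfs]
        ring
      rw [hv2] at h2
      rw [hv, abs_le] at *
      have hkc : (k : ℝ) * c ≤ ((-t).toNat : ℝ) * c := mul_le_mul_of_nonneg_right hkt H.hc.le
      have hk0 : 0 ≤ (k : ℝ) * c := mul_nonneg (Nat.cast_nonneg k) H.hc.le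
      rcases h1 with ⟨h1a, h1b⟩
      rcases h2 with ⟨h2a, h2b⟩
      constructor <;> linarith

lemma path (H : PCSetup f S s c M) (D : ℝ) (x y : G) (hx : |f x - D| ≤ M) (hy : |f y - D| ≤ M) :
    ∃ l : List G, (∀ g ∈ l, g ∈ letters S) ∧ x * l.prod = y ∧ GoodOn f D (M + c) x l := by
  obtain ⟨l₀, m₀, hl₀, hp₀, hg₀, he₀⟩ := H.compA D M x hx
  obtain ⟨u, hu, hup⟩ := H.hgen (x⁻¹ * y)
  obtain ⟨l₁, m₁, hl₁, hp₁, hg₁, he₁⟩ := H.proc D u hu (x * l₀.prod) he₀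
  have hxy : x * l₀.prod * l₁.prod = y * s ^ (m₀ + m₁) := by
    rw [hp₀, hp₁, hup, zpow_add]
    calc x * s ^ m₀ * (x⁻¹ * y * s ^ m₁) = (x * x⁻¹) * (y * (s ^ m₀ * s ^ m₁)) := by
          simp only [mul_comm, mul_left_comm, mul_assoc]
      _ = y * (s ^ m₀ * s ^ m₁) := by rw [mul_inv_cancel, one_mul]
  have hend : x * l₀.prod * l₁.prod * s ^ (-(m₀ + m₁)) = y := by
    rw [hxy, mul_assoc, ← zpow_add, add_neg_cancel, zpow_zero, mul_one]
  have h0M : 0 ≤ M := le_trans H.hc.le H.hcM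
  obtain ⟨l₂, hl₂, hp₂, hg₂⟩ := H.run D (M + c) (-(m₀ + m₁)) (x * l₀.prod * l₁.prod)
    (by linarith [H.hc.le]) (by rw [hend]; linarith [H.hc.le])
  refine ⟨l₀ ++ (l₁ ++ l₂), ?_, ?_, ?_⟩
  · intro a ha
    rcases List.mem_append.1 ha with h | h
    · rcases hl₀ a h with rfl | rfl
      · exact H.hs
      · exact myletters_inv H.hs
    rcases List.mem_append.1 h with h | h
    · exact hl₁ a h
    · exact hl₂ a h
  · rw [List.prod_append, List.prod_append, hp₂, ← mul_assoc, ← mul_assoc]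
    exact hend
  · refine GoodOn.append (hg₀.mono (max_le (by linarith [H.hc.le]) (by linarith [H.hc.le]))) ?_
    exact GoodOn.append hg₁ hg₂

end PCSetup

end MyAux3

section MyAux4

open Filter

variable {G : Type*} [Group G]

lemma mycross_up {a : ℕ → ℝ} {M : ℝ} (h0 : a 0 = 0) (hstep : ∀ k, |a (k + 1) - a k| ≤ M)
    (ht : Tendsto a atTop atTop) {D : ℝ} (hD : 0 < D) : ∃ k, |a k - D| ≤ M := by
  by_contra hcon
  push_neg at hcon
  have hM0 : 0 ≤ M := le_trans (abs_nonneg _) (hstep 0)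
  have hall : ∀ k, a k ≤ D := by
    intro k
    induction k with
    | zero => rw [h0]; exact hD.le
    | succ k ih =>
      have h1 := hstep k
      have h2 := hcon (k + 1)
      rw [abs_le] at h1
      rcases lt_abs.1 h2 with h | h <;> linarith [h1.1, h1.2]
  obtain ⟨k, hk⟩ := (ht.eventually_gt_atTop D).exists
  exact absurd (hall k) (not_le.2 hk)

lemma mycross_down {a : ℕ → ℝ} {M : ℝ} (h0 : a 0 = 0) (hstep : ∀ k, |a (k + 1) - a k| ≤ M)
    (ht : Tendsto a atTop atBot) {D : ℝ} (hD : D < 0) : ∃ k, |a k - D| ≤ M := by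
  have h0' : (fun k => -a k) 0 = 0 := by simp [h0]
  have hstep' : ∀ k, |(fun k => -a k) (k + 1) - (fun k => -a k) k| ≤ M := by
    intro k
    have h2 : (fun k => -a k) (k + 1) - (fun k => -a k) k = -(a (k + 1) - a k) := by ring
    rw [h2, abs_neg]
    exact hstep k
  have ht' : Tendsto (fun k => -a k) atTop atTop := tendsto_neg_atBot_atTop.comp ht
  obtain ⟨k, hk⟩ := mycross_up h0' hstep' ht' (D := -D) (by linarith)
  refine ⟨k, ?_⟩
  have : -a k - -D = -(a k - D) := by ring
  rw [this, abs_neg] at hk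
  exact hk

lemma tendsto_of_wsign_one {f : G → ℝ} {w : ℕ → G} (h : wsign f w = 1) :
    Tendsto (fun k => f (prefixProd w k)) atTop atTop := by
  classical
  by_contra hc
  unfold wsign at h
  rw [if_neg hc] at h
  split_ifs at h <;> simp at h

lemma tendsto_of_wsign_neg_one {f : G → ℝ} {w : ℕ → G} (h : wsign f w = -1) :
    Tendsto (fun k => f (prefixProd w k)) atTop atBot := by
  classical
  unfold wsign at h
  by_cases h1 : Tendsto (fun k => f (prefixProd w k)) atTop atTop
  · rw [if_pos h1] at h
    simp at h
  · rw [if_neg h1] at h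
    by_contra h2
    rw [if_neg h2] at h
    simp at h

lemma wsign_eq_one {f : G → ℝ} {w : ℕ → G}
    (h : Tendsto (fun k => f (prefixProd w k)) atTop atTop) : wsign f w = 1 := by
  unfold wsign
  rw [if_pos h]

lemma wsign_eq_neg_one {f : G → ℝ} {w : ℕ → G}
    (h : Tendsto (fun k => f (prefixProd w k)) atTop atBot) : wsign f w = -1 := by
  unfold wsign
  rw [if_neg, if_pos h]
  intro hT
  obtain ⟨k, hk1, hk2⟩ := ((hT.eventually_gt_atTop 0).and (h.eventually_lt_atBot 0)).exists
  linarith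

end MyAux4

section MyAux5

open Filter

variable {G : Type*} [CommGroup G]

namespace PCSetup

variable {f : G → ℝ} {S : Set G} {s : G} {c M : ℝ}

lemma word_step (H : PCSetup f S s c M) {w : ℕ → G} (hw : IsWord S w) (k : ℕ) :
    |f (prefixProd w (k + 1)) - f (prefixProd w k)| ≤ M := by
  have h : prefixProd w (k + 1) = prefixProd w k * w k := rfl
  rw [h, H.hf]
  simpa using H.hM (w k) (hw k)

lemma word_cross (H : PCSetup f S s c M) {w : ℕ → G} (hw : IsWord S w) {D : ℝ}
    (hsgn : (0 < D ∧ Tendsto (fun k => f (prefixProd w k)) atTop atTop) ∨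
            (D < 0 ∧ Tendsto (fun k => f (prefixProd w k)) atTop atBot)) :
    ∃ k, |f (prefixProd w k) - D| ≤ M := by
  have h0 : f (prefixProd w 0) = 0 := H.f_one
  rcases hsgn with ⟨hD, ht⟩ | ⟨hD, ht⟩
  · exact mycross_up h0 (H.word_step hw) ht hD
  · exact mycross_down h0 (H.word_step hw) ht hD

lemma equiv (H : PCSetup f S s c M) (w v : ℕ → G) (hw : IsWord S w) (hv : IsWord S v)
    (hsgn : wsign f w = wsign f v) (hpm : wsign f w = 1 ∨ wsign f w = -1) :
    WordEquiv f S w v := by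
  have h0M : 0 ≤ M := le_trans H.hc.le H.hcM
  refine ⟨hsgn, M + c, by linarith [H.hc], ?_⟩
  intro D hD
  have hDsgn : (0 < D ∧ wsign f w = 1) ∨ (D < 0 ∧ wsign f w = -1) := by
    rcases hpm with h | h
    · left
      refine ⟨?_, h⟩
      rw [h] at hD
      push_cast at hD
      linarith [H.hc]
    · right
      refine ⟨?_, h⟩
      rw [h] at hD
      push_cast at hD
      linarith [H.hc]
  have hcw : ∃ k, |f (prefixProd w k) - D| ≤ M := by
    refine H.word_cross hw ?_
    rcases hDsgn with ⟨h1, h2⟩ | ⟨h1, h2⟩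
    · exact Or.inl ⟨h1, tendsto_of_wsign_one h2⟩
    · exact Or.inr ⟨h1, tendsto_of_wsign_neg_one h2⟩
  have hcv : ∃ l, |f (prefixProd v l) - D| ≤ M := by
    refine H.word_cross hv ?_
    rcases hDsgn with ⟨h1, h2⟩ | ⟨h1, h2⟩
    · exact Or.inl ⟨h1, tendsto_of_wsign_one (hsgn ▸ h2)⟩
    · exact Or.inr ⟨h1, tendsto_of_wsign_neg_one (hsgn ▸ h2)⟩
  obtain ⟨k, hk⟩ := hcw
  obtain ⟨l, hl⟩ := hcv
  obtain ⟨d, hd1, hd2, hd3⟩ := H.path D (prefixProd w k) (prefixProd v l) hk hl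
  exact ⟨k, l, d, hd1, hd2, hd3⟩

end PCSetup

end MyAux5

set_option maxHeartbeats 1000000 in
/-- **Example (Manning, Example 2.7).** For `G = ℤ^d` with the standard generating
set `S` and a nonzero homomorphism `f : ℤ^d → ℝ` (which is in particular a
pseudocharacter with `‖δf‖ = 0`), the set `E(f,S)` has precisely two elements, one
positive and one negative. -/
theorem ends_of_free_abelian_group
    (d : ℕ) (hd : 1 ≤ d) (F : (Fin d → ℤ) →+ ℝ) (hF : F ≠ 0) :
    IsPseudochar (G := Multiplicative (Fin d → ℤ)) (fun g => F (Multiplicative.toAdd g)) ∧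
    (∃! x, x ∈ EndsPos (G := Multiplicative (Fin d → ℤ))
      (fun g => F (Multiplicative.toAdd g))
      {g : Multiplicative (Fin d → ℤ) |
        ∃ i : Fin d, g = Multiplicative.ofAdd (Pi.single i 1)}) ∧
    (∃! x, x ∈ EndsNeg (G := Multiplicative (Fin d → ℤ))
      (fun g => F (Multiplicative.toAdd g))
      {g : Multiplicative (Fin d → ℤ) |
        ∃ i : Fin d, g = Multiplicative.ofAdd (Pi.single i 1)}) := by
  classical
  set f : Multiplicative (Fin d → ℤ) → ℝ := fun g => F (Multiplicative.toAdd g) with hf_def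
  set S : Set (Multiplicative (Fin d → ℤ)) :=
    {g : Multiplicative (Fin d → ℤ) | ∃ i : Fin d, g = Multiplicative.ofAdd (Pi.single i 1)}
    with hS_def
  have hf_mul : ∀ x y : Multiplicative (Fin d → ℤ), f (x * y) = f x + f y := by
    intro x y
    show F (Multiplicative.toAdd (x * y)) = F (Multiplicative.toAdd x) + F (Multiplicative.toAdd y)
    rw [toAdd_mul, map_add]
  -- pick a coordinate with nonzero value
  have hex : ∃ i : Fin d, F (Pi.single i 1) ≠ 0 := by
    by_contra h
    push_neg at h
    refine hF (DFunLike.ext F 0 fun v => ?_)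
    show F v = 0
    have hv : v = ∑ i : Fin d, Pi.single i (v i) := (Finset.univ_sum_single v).symm
    rw [hv, map_sum]
    refine Finset.sum_eq_zero fun i _ => ?_
    have h1 : (Pi.single i (v i) : Fin d → ℤ) = (v i) • (Pi.single i 1 : Fin d → ℤ) := by
      ext j
      rcases eq_or_ne j i with rfl | hj
      · simp
      · simp [Pi.single_eq_of_ne hj]
    rw [h1, map_zsmul, h i, smul_zero]
  obtain ⟨i₀, hi₀⟩ := hex
  set c : ℝ := |F (Pi.single i₀ 1)| with hc_def
  have hc : 0 < c := abs_pos.2 hi₀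
  set M : ℝ := ∑ i : Fin d, |F (Pi.single i 1)| with hM_def
  have hcM : c ≤ M :=
    Finset.single_le_sum (f := fun i => |F (Pi.single i 1)|)
      (fun i _ => abs_nonneg _) (Finset.mem_univ i₀)
  have hbase_mem : ∀ i : Fin d, Multiplicative.ofAdd (Pi.single i (1:ℤ)) ∈ letters S :=
    fun i => Or.inl ⟨i, rfl⟩
  obtain ⟨s, hsmem, hsval⟩ :
      ∃ s : Multiplicative (Fin d → ℤ), s ∈ letters S ∧ f s = c := by
    rcases hi₀.lt_or_gt with h | h
    · refine ⟨(Multiplicative.ofAdd (Pi.single i₀ 1))⁻¹, Or.inr (Set.inv_mem_inv.2 ⟨i₀, rfl⟩), ?_⟩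
      show F (Multiplicative.toAdd (Multiplicative.ofAdd (Pi.single i₀ (1:ℤ)))⁻¹) = c
      rw [toAdd_inv, toAdd_ofAdd, map_neg]
      rw [hc_def, abs_of_neg h]
    · refine ⟨Multiplicative.ofAdd (Pi.single i₀ 1), hbase_mem i₀, ?_⟩
      show F (Pi.single i₀ (1:ℤ)) = c
      rw [hc_def, abs_of_pos h]
  have hM : ∀ g ∈ letters S, |f g| ≤ M := by
    rintro g (⟨i, rfl⟩ | hg)
    · show |F (Pi.single i (1:ℤ))| ≤ M
      exact Finset.single_le_sum (f := fun i => |F (Pi.single i 1)|)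
        (fun i _ => abs_nonneg _) (Finset.mem_univ i)
    · obtain ⟨i, hi⟩ := Set.mem_inv.1 hg
      have hgi : g = (Multiplicative.ofAdd (Pi.single i (1:ℤ)))⁻¹ := by
        rw [← inv_inv g, hi]
      rw [hgi]
      show |F (Multiplicative.toAdd (Multiplicative.ofAdd (Pi.single i (1:ℤ)))⁻¹)| ≤ M
      rw [toAdd_inv, toAdd_ofAdd, map_neg, abs_neg]
      exact Finset.single_le_sum (f := fun i => |F (Pi.single i 1)|)
        (fun i _ => abs_nonneg _) (Finset.mem_univ i)
  have hsingle : ∀ (i : Fin d) (n : ℤ), ∃ l : List (Multiplicative (Fin d → ℤ)),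
      (∀ x ∈ l, x ∈ letters S) ∧ l.prod = Multiplicative.ofAdd (Pi.single i n) := by
    intro i n
    obtain ⟨l, hl, hp⟩ := myzpow_list (hbase_mem i) n
    have hy : n • (Pi.single i 1 : Fin d → ℤ) = (Pi.single i n : Fin d → ℤ) := by
      ext j
      rcases eq_or_ne j i with rfl | hj
      · simp
      · simp [Pi.single_eq_of_ne hj]
    refine ⟨l, hl, ?_⟩
    rw [hp, ← ofAdd_zsmul, hy]
  have hgen : ∀ g : Multiplicative (Fin d → ℤ),
      ∃ l : List (Multiplicative (Fin d → ℤ)), (∀ x ∈ l, x ∈ letters S) ∧ l.prod = g := by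
    intro g
    have key : ∀ t : Finset (Fin d), ∃ l : List (Multiplicative (Fin d → ℤ)),
        (∀ x ∈ l, x ∈ letters S) ∧
        l.prod = ∏ i ∈ t, Multiplicative.ofAdd (Pi.single i (Multiplicative.toAdd g i)) := by
      intro t
      induction t using Finset.induction_on with
      | empty => exact ⟨[], by simp, by simp⟩
      | @insert a t hnotmem ih =>
        obtain ⟨l, hl, hp⟩ := ih
        obtain ⟨l', hl', hp'⟩ := hsingle a (Multiplicative.toAdd g a)
        refine ⟨l' ++ l, ?_, ?_⟩
        · intro x hx
          rcases List.mem_append.1 hx with h | h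
          exacts [hl' x h, hl x h]
        · rw [List.prod_append, hp, hp', Finset.prod_insert hnotmem]
    obtain ⟨l, hl, hp⟩ := key Finset.univ
    refine ⟨l, hl, ?_⟩
    rw [hp, ← ofAdd_sum, Finset.univ_sum_single]
    simp
  have H : PCSetup f S s c M := ⟨hf_mul, hsmem, hsval, hc, hcM, hM, hgen⟩
  -- the two canonical words
  have hprefix_const : ∀ (g : Multiplicative (Fin d → ℤ)) (k : ℕ),
      prefixProd (fun _ => g) k = g ^ k := by
    intro g k
    induction k with
    | zero => rw [pow_zero]; rfl
    | succ k ih =>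
      show prefixProd (fun _ => g) k * g = g ^ (k + 1)
      rw [ih, pow_succ]
  have hwp : IsWord S (fun _ => s) := fun _ => hsmem
  have hwn : IsWord S (fun _ => s⁻¹) := fun _ => myletters_inv hsmem
  have htp : Tendsto (fun k => f (prefixProd (fun _ => s) k)) atTop atTop := by
    have heq : (fun k => f (prefixProd (fun _ => s) k)) = fun k : ℕ => (k : ℝ) * c := by
      funext k
      rw [hprefix_const, H.f_pow, hsval]
    rw [heq]
    exact tendsto_natCast_atTop_atTop.atTop_mul_const hc
  have htn : Tendsto (fun k => f (prefixProd (fun _ => s⁻¹) k)) atTop atBot := by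
    have heq : (fun k => f (prefixProd (fun _ => s⁻¹) k)) = fun k : ℕ => (k : ℝ) * (-c) := by
      funext k
      rw [hprefix_const, H.f_pow, H.f_inv, hsval]
    rw [heq]
    exact tendsto_natCast_atTop_atTop.atTop_mul_const_of_neg (by linarith)
  have hsw : wsign f (fun _ => s) = 1 := wsign_eq_one htp
  have hsn : wsign f (fun _ => s⁻¹) = -1 := wsign_eq_neg_one htn
  refine ⟨⟨fun α n => ?_, 0, fun α β => ?_⟩, ?_, ?_⟩
  · show F (Multiplicative.toAdd (α ^ n)) = (n : ℝ) * F (Multiplicative.toAdd α)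
    rw [toAdd_zpow, map_zsmul, zsmul_eq_mul]
  · show |F (Multiplicative.toAdd α) + F (Multiplicative.toAdd β) -
      F (Multiplicative.toAdd (α * β))| ≤ 0
    rw [toAdd_mul, map_add]
    simp
  · refine ⟨endClass f S ⟨fun _ => s, hwp, Or.inl hsw⟩, ⟨_, hsw, rfl⟩, ?_⟩
    rintro y ⟨w', hw', rfl⟩
    apply Quot.sound
    exact H.equiv w'.1 (fun _ => s) w'.2.1 hwp (by rw [hw', hsw]) (Or.inl hw')
  · refine ⟨endClass f S ⟨fun _ => s⁻¹, hwn, Or.inr hsn⟩, ⟨_, hsn, rfl⟩, ?_⟩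
    rintro y ⟨w', hw', rfl⟩
    apply Quot.sound
    exact H.equiv w'.1 (fun _ => s⁻¹) w'.2.1 hwn (by rw [hw', hsn]) (Or.inr hw')
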